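/- Let λ be a singular cardinal of uncountable cofinality κ, let ⟨λ_i : i < κ⟩ be an increasing continuous sequence of cardinals with supremum λ, and let D be the club filter on κ. Then every ordinal α < λ⁺ is of the form rk_D(f) for some f ∈ ∏_{i<κ} λ_i⁺ (i.e. some f : κ → Ord with f(i) < λ_i⁺ for all i); in particular rk_D(⟨λ_i⁺ : i < κ⟩) ≥ λ⁺. -/

import Mathlib

/-- `f <_D g` iff `{y | f y < g y} ∈ D`. -/
def ltD {Y : Type 1} (D : Filter Y) (f g : Y → Ordinal.{0}) : Prop :=
  {y | f y < g y} ∈ D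

/-- The rank `rk_D f` of `f : Y → Ord` with respect to the (well-founded, for countably
complete `D`) relation `<_D`. -/
noncomputable def rkD {Y : Type 1} (D : Filter Y) (f : Y → Ordinal.{0}) : Ordinal.{1} :=
  haveI := Classical.dec
  if h : Acc (ltD D) f then h.rank else 0

/-- `C` is a club (closed unbounded set) in the ordinal `k`. -/
def IsClubIn (C : Set Ordinal) (k : Ordinal) : Prop :=
  C ⊆ Set.Iio k ∧ (∀ β < k, ∃ γ ∈ C, β ≤ γ) ∧
    ∀ δ < k, Order.IsSuccLimit δ → (∀ β < δ, ∃ γ ∈ C, β < γ ∧ γ < δ) → δ ∈ C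

/-- The club filter on (the set of ordinals below) `k`: the filter generated by the
closed unbounded subsets of `k`. -/
def clubFilter (k : Ordinal) : Filter ↥(Set.Iio k) :=
  Filter.generate {S : Set ↥(Set.Iio k) |
    ∃ C : Set Ordinal, IsClubIn C k ∧ S = {x : ↥(Set.Iio k) | ↑x ∈ C}}

/-!
Fix, for every `α < λ⁺`, a map `u α` from `λ` onto the ordinals below `α`, and define by
recursion `F α i = sup {F (u α ζ) i + 1 : ζ < λ_i}`.  Each `F α i` is a supremum of at most `λ_i`
ordinals below the regular cardinal `λ_i⁺`, so `F α` lies in `∏ λ_i⁺`.  If `β = u α ζ` then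
`ζ < λ_i` for a tail of `i < κ`, hence `F β < F α` on a club; so `rk_D (F α) ≥ α`.  Because the
club filter on `κ` is countably complete, `<_D` is well founded, and the ranks realised inside
`∏ λ_i⁺` form an initial segment: below a given `g` every smaller rank is realised by some
`f <_D g`, which can be truncated to `min f g` without changing its rank.
-/

open Cardinal Order Set Filter

lemma wellFounded_ltD {Y : Type 1} (D : Filter Y) [CountableInterFilter D] [NeBot D] :
    WellFounded (ltD D) := by
  refine wellFounded_iff_isEmpty_descending_chain.2 ⟨fun ⟨f, hf⟩ => ?_⟩
  obtain ⟨y, hy⟩ := Filter.nonempty_of_mem (countable_iInter_mem.2 hf)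
  obtain ⟨n, hn⟩ := WellFounded.not_rel_apply_succ (r := (· < ·)) (fun n => f n y)
  exact hn (mem_iInter.1 hy n)

lemma neBot_countableGenerate_isClub {α : Type*} [LinearOrder α] [WellFoundedLT α] [Nonempty α]
    (hα : cof α ≠ ℵ₀) : NeBot (countableGenerate {s : Set α | IsClub s}) := by
  refine forall_mem_nonempty_iff_neBot.1 fun s hs => ?_
  obtain ⟨S, hSclub, hScount, hSs⟩ := mem_countableGenerate_iff.1 hs
  exact (IsClub.sInter_of_countable hα hScount hSclub).nonempty.mono hSs

section Clubs

variable {k : Ordinal.{0}}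

lemma IsClubIn.isClub_preimage {C : Set Ordinal.{0}} (hC : IsClubIn C k) :
    IsClub {x : Iio k | ↑x ∈ C} := by
  obtain ⟨hCk, hunbdd, hclosed⟩ := hC
  refine ⟨fun d hdC hd _ a ha => ?_, fun x => ?_⟩
  · by_cases had : a ∈ d
    · exact hdC had
    refine hclosed a a.2 ((principalSegIio k).isSuccLimit_apply_iff.2
      (ha.isSuccLimit_of_notMem hd had)) fun β hβ => ?_
    obtain ⟨x, hxd, hβx, hxa⟩ := ha.exists_between' had (b := ⟨β, hβ.trans a.2⟩) hβ
    exact ⟨x, hdC hxd, hβx, hxa⟩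
  · obtain ⟨γ, hγC, hxγ⟩ := hunbdd x x.2
    exact ⟨⟨γ, hCk hγC⟩, hγC, hxγ⟩

lemma countableGenerate_isClub_le_clubFilter :
    countableGenerate {s : Set (Iio k) | IsClub s} ≤ clubFilter k := by
  rw [clubFilter, le_generate_iff]
  rintro _ ⟨C, hC, rfl⟩
  exact CountableGenerateSets.basic hC.isClub_preimage

lemma wellFounded_ltD_clubFilter (hk : ℵ₀ < k.cof) : WellFounded (ltD (clubFilter k)) := by
  have : Nonempty (Iio k) := ⟨⟨0, (Ordinal.one_lt_cof_iff.1 (one_lt_aleph0.trans hk)).pos⟩⟩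
  have : NeBot (countableGenerate {s : Set (Iio k) | IsClub s}) := by
    refine neBot_countableGenerate_isClub ?_
    rw [Ordinal.cof_Iio, ← Ordinal.lift_cof, Ne, lift_eq_aleph0]
    exact hk.ne'
  exact Subrelation.wf (fun h => countableGenerate_isClub_le_clubFilter h) (wellFounded_ltD _)

lemma eventually_gt_clubFilter (hk : IsSuccLimit k) {j : Ordinal.{0}} (hj : j < k) :
    ∀ᶠ x : Iio k in clubFilter k, j < (x : Ordinal) := by
  have hclub : IsClubIn (Ioo j k) k := by
    refine ⟨fun _ hγ => hγ.2, fun β hβ => ?_, fun δ _ hδ hdense => ?_⟩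
    · exact ⟨max β (succ j), ⟨(lt_succ j).trans_le (le_max_right _ _),
        max_lt hβ (hk.succ_lt hj)⟩, le_max_left _ _⟩
    · obtain ⟨γ, hγ, -, hγδ⟩ := hdense 0 hδ.pos
      exact ⟨hγ.1.trans hγδ, ‹δ < k›⟩
  exact mem_of_superset (mem_generate_of_mem ⟨_, hclub, rfl⟩) fun x hx => hx.1

lemma eventually_lt_of_lt_sSup (hk : IsSuccLimit k) {L : Ordinal.{0} → Cardinal.{0}}
    (hL : MonotoneOn L (Iio k)) {c : Cardinal.{0}} (hc : c < sSup (L '' Iio k)) :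
    ∀ᶠ x : Iio k in clubFilter k, c < L x := by
  obtain ⟨_, ⟨j, hj, rfl⟩, hcj⟩ := exists_lt_of_lt_csSup (Set.Nonempty.image L ⟨0, hk.pos⟩) hc
  filter_upwards [eventually_gt_clubFilter hk hj] with x hx
  exact hcj.trans_le (hL hj x.2 hx.le)

end Clubs

section Rank

variable {Y : Type 1} {D : Filter Y}

lemma rkD_eq_rank (wf : WellFounded (ltD D)) (f : Y → Ordinal.{0}) :
    rkD D f = (wf.apply f).rank := by
  rw [rkD, dif_pos (wf.apply f)]

lemma rkD_lt_rkD (wf : WellFounded (ltD D)) {f g : Y → Ordinal.{0}} (h : ltD D f g) :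
    rkD D f < rkD D g := by
  rw [rkD_eq_rank wf, rkD_eq_rank wf]
  exact Acc.rank_lt_of_rel _ h

lemma exists_ltD_le_rkD_of_lt_rkD (wf : WellFounded (ltD D)) {g : Y → Ordinal.{0}}
    {β : Ordinal.{1}} (h : β < rkD D g) : ∃ f, ltD D f g ∧ β ≤ rkD D f := by
  rw [rkD_eq_rank wf, Acc.rank_eq, Ordinal.lt_iSup_iff] at h
  obtain ⟨⟨f, hfg⟩, hβ⟩ := h
  exact ⟨f, hfg, (rkD_eq_rank wf f).symm ▸ Order.lt_succ_iff.1 hβ⟩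

lemma rkD_le_rkD_of_forall_ltD (wf : WellFounded (ltD D)) {g g' : Y → Ordinal.{0}}
    (h : ∀ f, ltD D f g → ltD D f g') : rkD D g ≤ rkD D g' := by
  rw [rkD_eq_rank wf g, Acc.rank_eq]
  refine Ordinal.iSup_le fun f => Order.succ_le_of_lt ?_
  simpa only [rkD_eq_rank wf] using rkD_lt_rkD wf (h f f.2)

lemma rkD_congr (wf : WellFounded (ltD D)) {g g' : Y → Ordinal.{0}} (h : g =ᶠ[D] g') :
    rkD D g = rkD D g' :=
  le_antisymm
    (rkD_le_rkD_of_forall_ltD wf fun _ hf =>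
      mem_of_superset (inter_mem hf h) fun _ ⟨hlt, he⟩ => lt_of_lt_of_eq hlt he)
    (rkD_le_rkD_of_forall_ltD wf fun _ hf =>
      mem_of_superset (inter_mem hf h) fun _ ⟨hlt, he⟩ => lt_of_lt_of_eq hlt he.symm)

lemma lift_le_rkD_of_forall_lt (wf : WellFounded (ltD D)) {θ : Ordinal.{0}}
    {g : Y → Ordinal.{0}} (h : ∀ α < θ, ∃ f, Ordinal.lift.{1} α ≤ rkD D f ∧ ltD D f g) :
    Ordinal.lift.{1} θ ≤ rkD D g := by
  by_contra! hg
  obtain ⟨α, hα, hαg⟩ := Ordinal.lt_lift_iff.1 hg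
  obtain ⟨f, hαf, hfg⟩ := h α hα
  exact (hαf.trans_lt (rkD_lt_rkD wf hfg)).ne hαg

lemma lift_le_rkD_of_ltD_chain (wf : WellFounded (ltD D)) {θ : Ordinal.{0}}
    {F : Ordinal.{0} → Y → Ordinal.{0}} (hF : ∀ α < θ, ∀ β < α, ltD D (F β) (F α))
    {α : Ordinal.{0}} (hα : α < θ) : Ordinal.lift.{1} α ≤ rkD D (F α) := by
  induction α using WellFoundedLT.induction with
  | _ α IH =>
    exact lift_le_rkD_of_forall_lt wf fun β hβ => ⟨F β, IH β hβ (hβ.trans hα), hF α hα β hβ⟩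

lemma exists_rkD_eq_of_le (wf : WellFounded (ltD D)) {b g : Y → Ordinal.{0}}
    (hg : ∀ y, g y < b y) {β : Ordinal.{1}} (hβ : β ≤ rkD D g) :
    ∃ f, (∀ y, f y < b y) ∧ rkD D f = β := by
  induction g using wf.induction generalizing β with
  | _ g IH =>
    obtain rfl | hlt := hβ.eq_or_lt
    · exact ⟨g, hg, rfl⟩
    obtain ⟨f, hfg, hβf⟩ := exists_ltD_le_rkD_of_lt_rkD wf hlt
    -- `f` need not lie below `b`, but its truncation `f ⊓ g` does and is `D`-equal to `f`
    have hinf : f ⊓ g =ᶠ[D] f := mem_of_superset hfg fun y hy => inf_eq_left.2 hy.le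
    have hinfg : ltD D (f ⊓ g) g := mem_of_superset hfg fun y (hy : f y < g y) =>
      (inf_le_left : f y ⊓ g y ≤ f y).trans_lt hy
    exact IH (f ⊓ g) hinfg (fun y => inf_le_right.trans_lt (hg y))
      (hβf.trans_eq (rkD_congr wf hinf).symm)

end Rank

section Chain

variable {Y : Type 1} (μ : Y → Cardinal.{0}) (u : Ordinal.{0} → Ordinal.{0} → Ordinal.{0})

/-- `u α` is meant to map `λ` onto the ordinals below `α`; values `u α ζ ≥ α` are ignored.
Where `μ y` is finite, `(succ (μ y)).ord` is not a limit ordinal, so the chain is `0` there. -/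
noncomputable def ltDChain : Ordinal.{0} → Y → Ordinal.{0} :=
  Ordinal.lt_wf.fix fun α F y =>
    if ℵ₀ ≤ μ y then ⨆ ζ : Iio (μ y).ord, if h : u α ζ < α then succ (F (u α ζ) h y) else 0
    else 0

lemma ltDChain_eq (α : Ordinal.{0}) (y : Y) :
    ltDChain μ u α y = if ℵ₀ ≤ μ y then
      ⨆ ζ : Iio (μ y).ord, if u α ζ < α then succ (ltDChain μ u (u α ζ) y) else 0 else 0 := by
  rw [ltDChain, WellFounded.fix_eq]
  simp only [dite_eq_ite]

lemma ltDChain_lt_ord_succ (α : Ordinal.{0}) (y : Y) :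
    ltDChain μ u α y < (succ (μ y)).ord := by
  induction α using WellFoundedLT.induction with
  | _ α IH =>
    have hpos : (0 : Ordinal) < (succ (μ y)).ord := ord_pos.2 (bot_le.trans_lt (lt_succ _))
    rw [ltDChain_eq]
    split_ifs with hμ
    · refine Ordinal.lift_iSup_lt_of_lt_cof ?_ fun ζ => ?_
      · rw [mk_Iio_ordinal, card_ord, ← Ordinal.lift_cof, (isRegular_succ hμ).cof_ord, lift_uzero]
        exact lift_lt.2 (lt_succ _)
      · split_ifs with h
        · exact (isSuccLimit_ord (hμ.trans (le_succ _))).succ_lt (IH _ h)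
        · exact hpos
    · exact hpos

lemma ltD_ltDChain {D : Filter Y} {lam : Cardinal.{0}} (hlam : ℵ₀ < lam)
    (hμ : ∀ c < lam, ∀ᶠ y in D, c < μ y) {α β : Ordinal.{0}}
    (hu : Iio α ⊆ u α '' Iio lam.ord) (hβ : β < α) :
    ltD D (ltDChain μ u β) (ltDChain μ u α) := by
  obtain ⟨ζ, hζ, rfl⟩ := hu hβ
  filter_upwards [hμ _ (max_lt (lt_ord.1 hζ) hlam)] with y hy
  rw [ltDChain_eq μ u α, if_pos ((le_max_right _ _).trans hy.le)]
  calc ltDChain μ u (u α ζ) y < succ (ltDChain μ u (u α ζ) y) := lt_succ _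
    _ ≤ _ := by
      refine (Ordinal.le_iSup _ ⟨ζ, lt_ord.2 ((le_max_left _ _).trans_lt hy)⟩).trans_eq' ?_
      rw [if_pos hβ]

lemma exists_Iio_subset_image_Iio_ord {α : Ordinal.{0}} {lam : Cardinal.{0}}
    (hα : α.card ≤ lam) : ∃ v : Ordinal.{0} → Ordinal.{0}, Iio α ⊆ v '' Iio lam.ord := by
  obtain ⟨e⟩ : Nonempty (Iio α ↪ Iio lam.ord) := by
    rw [← Cardinal.le_def, mk_Iio_ordinal, mk_Iio_ordinal, card_ord]
    exact lift_le.2 hα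
  have he : Function.Injective fun β => (e β : Ordinal) := Subtype.val_injective.comp e.injective
  exact ⟨Function.extend (fun β => (e β : Ordinal)) (fun β => β) 0,
    fun β hβ => ⟨e ⟨β, hβ⟩, (e _).2, he.extend_apply _ _ ⟨β, hβ⟩⟩⟩

lemma exists_ltD_chain {D : Filter Y} {lam : Cardinal.{0}} (hlam : ℵ₀ < lam)
    (hμ : ∀ c < lam, ∀ᶠ y in D, c < μ y) :
    ∃ F : Ordinal.{0} → Y → Ordinal.{0}, (∀ α y, F α y < (succ (μ y)).ord) ∧
      ∀ α < (succ lam).ord, ∀ β < α, ltD D (F β) (F α) := by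
  choose! u hu using fun α (hα : α < (succ lam).ord) =>
    exists_Iio_subset_image_Iio_ord (lt_succ_iff.1 (lt_ord.1 hα))
  exact ⟨ltDChain μ u, ltDChain_lt_ord_succ μ u,
    fun α hα β hβ => ltD_ltDChain μ u hlam hμ (hu α hα) hβ⟩

end Chain

theorem stmt16_general (lam κ : Cardinal.{0})
    (hκunc : Cardinal.aleph0 < κ) (hsing : κ < lam) (hcof : lam.ord.cof = κ)
    (L : Ordinal → Cardinal.{0})
    (hmono : ∀ i j, i < j → j < κ.ord → L i < L j)
    (hsup : lam = sSup (L '' Set.Iio κ.ord)) :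
    (∀ α < (Order.succ lam).ord, ∃ f : ↥(Set.Iio κ.ord) → Ordinal,
        (∀ i : ↥(Set.Iio κ.ord), f i < (Order.succ (L ↑i)).ord) ∧
        rkD (clubFilter κ.ord) f = Ordinal.lift.{1, 0} α) ∧
    Ordinal.lift.{1, 0} (Order.succ lam).ord ≤
      rkD (clubFilter κ.ord) (fun i : ↥(Set.Iio κ.ord) => (Order.succ (L ↑i)).ord) := by
  have hκcof : ℵ₀ < κ.ord.cof := by rwa [← hcof, Ordinal.cof_ord_cof, hcof]
  have wf := wellFounded_ltD_clubFilter hκcof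
  have hL : StrictMonoOn L (Iio κ.ord) := fun i _ j hj hij => hmono i j hij hj
  obtain ⟨F, hFlt, hFD⟩ := exists_ltD_chain (fun i : Iio κ.ord => L i) (hκunc.trans hsing)
    fun c hc => eventually_lt_of_lt_sSup (isSuccLimit_ord hκunc.le) hL.monotoneOn (hsup ▸ hc)
  have hrank := fun α (hα : α < (succ lam).ord) => lift_le_rkD_of_ltD_chain wf hFD hα
  refine ⟨fun α hα => exists_rkD_eq_of_le wf (hFlt α) (hrank α hα), ?_⟩
  exact lift_le_rkD_of_forall_lt wf fun α hα => ⟨F α, hrank α hα, univ_mem' (hFlt α)⟩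

/-- let `λ` be a singular cardinal of uncountable cofinality `κ`,
`⟨λ_i : i < κ⟩` an increasing continuous sequence of cardinals with supremum `λ`, and `D`
the club filter on `κ`.  Then every ordinal `α < λ⁺` equals `rk_D f` for some
`f ∈ ∏_{i<κ} λ_i⁺`; in particular `rk_D ⟨λ_i⁺ : i < κ⟩ ≥ λ⁺`. -/
theorem stmt16 (lam κ : Cardinal.{0})
    (hκunc : Cardinal.aleph0 < κ) (hsing : κ < lam) (hcof : lam.ord.cof = κ)
    (L : Ordinal → Cardinal.{0})
    (hmono : ∀ i j, i < j → j < κ.ord → L i < L j)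
    (hcont : ∀ i < κ.ord, Order.IsSuccLimit i → L i = sSup (L '' Set.Iio i))
    (hsup : lam = sSup (L '' Set.Iio κ.ord)) :
    (∀ α < (Order.succ lam).ord, ∃ f : ↥(Set.Iio κ.ord) → Ordinal,
        (∀ i : ↥(Set.Iio κ.ord), f i < (Order.succ (L ↑i)).ord) ∧
        rkD (clubFilter κ.ord) f = Ordinal.lift.{1, 0} α) ∧
    Ordinal.lift.{1, 0} (Order.succ lam).ord ≤
      rkD (clubFilter κ.ord) (fun i : ↥(Set.Iio κ.ord) => (Order.succ (L ↑i)).ord) :=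
  stmt16_general lam κ hκunc hsing hcof L hmono hsup
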